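/- For a finite strategic game where each player l's utility is U_l(a) = u_l(a_l, a_{H_l}) + Σ_{i ∈ H_l} u_i(a_i, a_{H_i}), with symmetric neighborhood relation (i ∈ H_l ↔ l ∈ H_i) and each u_i depending only on the strategies of i and its neighbors H_i, the function Θ(a) = Σ_{l ∈ L} u_l(a_l, a_{H_l}) is an exact potential: for every player l and strategies a_l, a_l' with the others fixed at a_{−l}, U_l(a_l, a_{−l}) − U_l(a_l', a_{−l}) = Θ(a_l, a_{−l}) − Θ(a_l', a_{−l}). -/

import Mathlib

open Finset

theorem Finset.sum_sub_sum_eq_sum_sub_of_eq_of_notMem {ι M : Type*} [Fintype ι] [AddCommGroup M]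
    {f g : ι → M} (s : Finset ι) (h : ∀ i ∉ s, f i = g i) :
    ∑ i, f i - ∑ i, g i = ∑ i ∈ s, (f i - g i) := by
  rw [← sum_sub_distrib]
  exact (sum_subset (subset_univ s) fun i _ hi => by rw [h i hi, sub_self]).symm

/-- By symmetry of the neighbourhoods, `l` is not a neighbour of such a player `i`. -/
theorem utility_eq_of_notMem_insert_nbhd {L : Type*} [DecidableEq L] {A : L → Type*}
    {H : L → Finset L} (hHsymm : ∀ l i, i ∈ H l ↔ l ∈ H i) {u : L → (∀ j, A j) → ℝ}
    (hlocal : ∀ i (a b : ∀ j, A j), (∀ j ∈ insert i (H i), a j = b j) → u i a = u i b)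
    {l : L} {a a' : ∀ j, A j} (ha : ∀ j, j ≠ l → a j = a' j)
    {i : L} (hi : i ∉ insert l (H l)) : u i a = u i a' := by
  refine hlocal i a a' fun j hj => ha j ?_
  rintro rfl
  rw [mem_insert, hHsymm] at hi
  rw [mem_insert] at hj
  rcases hj with rfl | hj
  · exact hi (Or.inl rfl)
  · exact hi (Or.inr hj)

/-- With local utilities u_i depending only on the coordinates of
player i and its neighbors H_i, symmetric neighborhoods, and
U_l(a) = u_l(a) + Σ_{i ∈ H_l} u_i(a), the function Θ(a) = Σ_i u_i(a) is an
exact potential: unilateral deviations change U_l and Θ by the same amount. -/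
theorem exact_potential_game {L : Type*} [Fintype L] [DecidableEq L]
    {A : L → Type*} (H : L → Finset L)
    (hHirr : ∀ l, l ∉ H l)
    (hHsymm : ∀ l i, i ∈ H l ↔ l ∈ H i)
    (u : L → (∀ j, A j) → ℝ)
    (hlocal : ∀ i (a b : ∀ j, A j), (∀ j ∈ insert i (H i), a j = b j) → u i a = u i b)
    (U : L → (∀ j, A j) → ℝ)
    (hU : ∀ l a, U l a = u l a + ∑ i ∈ H l, u i a)
    (Θ : (∀ j, A j) → ℝ)
    (hΘ : ∀ a, Θ a = ∑ i, u i a) :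
    ∀ (l : L) (a a' : ∀ j, A j), (∀ j, j ≠ l → a j = a' j) →
      U l a - U l a' = Θ a - Θ a' := by
  intro l a a' ha
  rw [hU, hU, hΘ, hΘ, sum_sub_sum_eq_sum_sub_of_eq_of_notMem (insert l (H l))
      fun i hi => utility_eq_of_notMem_insert_nbhd hHsymm hlocal ha hi,
    sum_insert (hHirr l), sum_sub_distrib]
  ring
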